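/- arXiv:2205.11062 — 5 statements merged into one kernel-verified Lean document; each statement's English description precedes it below -/
import Mathlib

section
/- Let f : X → ℝ be a Morse function on a finite poset X and let M be an admissible Morse matching for f. If x₀, x₁, ..., x_r is a directed path in the graph H_M(X) (the Hasse diagram with edges in M oriented upward and all other edges oriented downward), then there is no z ∈ X with f(x₀) < f(z) < f(x_r). -/
def IsMorseFunction {X : Type*} [PartialOrder X] (f : X → ℝ) : Prop :=
  ∀ a b : X, a ⋖ b → f a < f b

def realizationSet {X : Type*} [PartialOrder X] [Fintype X] (S : Set X) : Set (X → ℝ) :=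
  {w | (∀ a, 0 ≤ w a) ∧ (∑ a, w a) = 1 ∧
    Function.support w ⊆ S ∧ IsChain (· ≤ ·) (Function.support w)}

def HomotopicallyTrivial {X : Type*} [PartialOrder X] [Fintype X] (S : Set X) : Prop :=
  ContractibleSpace ↥(realizationSet S)

def IsPosetMatching {X : Type*} [PartialOrder X] (M : Set (X × X)) : Prop :=
  (∀ p ∈ M, p.1 ⋖ p.2) ∧
  ∀ p ∈ M, ∀ q ∈ M, (p.1 = q.1 ∨ p.1 = q.2 ∨ p.2 = q.1 ∨ p.2 = q.2) → p = q

def hasseEdge {X : Type*} [PartialOrder X] (M : Set (X × X)) (a b : X) : Prop :=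
  (a ⋖ b ∧ (a, b) ∈ M) ∨ (b ⋖ a ∧ (b, a) ∉ M)

def IsMorseMatching {X : Type*} [PartialOrder X] (M : Set (X × X)) : Prop :=
  IsPosetMatching M ∧ ∀ x : X, ¬ Relation.TransGen (hasseEdge M) x x

def AdmissibleEdge {X : Type*} [PartialOrder X] [Fintype X] (f : X → ℝ) (p : X × X) : Prop :=
  HomotopicallyTrivial ({z | z < p.2} \ {p.1}) ∧ ¬ ∃ z, f p.1 < f z ∧ f z < f p.2

def IsAdmissibleMorseMatching {X : Type*} [PartialOrder X] [Fintype X] (f : X → ℝ) (M : Set (X × X)) : Prop :=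
  IsMorseMatching M ∧ ∀ p ∈ M, AdmissibleEdge f p

def IsCriticalPoint {X : Type*} (M : Set (X × X)) (x : X) : Prop :=
  ∀ p ∈ M, p.1 ≠ x ∧ p.2 ≠ x

def orderComplexOn {X : Type*} [PartialOrder X] (S : Set X) : Set (Finset X) :=
  {s | s.Nonempty ∧ ↑s ⊆ S ∧ IsChain (· ≤ ·) (s : Set X)}

/-! Along a path starting at level `c = f x₀`, no value of `f` ever lies in the gap `(c, f xᵢ)`.
A downward edge lowers `f`, so it cannot land inside the gap and lands at level `≤ c`. An upward
edge follows a matched pair, so by the matching property the path did not arrive at its bottom by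
another upward edge; hence it starts at level `≤ c`, and admissibility leaves no value of `f`
between the two ends of the pair. -/

section

variable {X : Type*} {f : X → ℝ} {M : Set (X × X)} {c : ℝ}

theorem IsPosetMatching.fst_ne_snd [PartialOrder X] (hM : IsPosetMatching M) {p q : X × X}
    (hp : p ∈ M) (hq : q ∈ M) : p.1 ≠ q.2 := by
  intro h
  obtain rfl := hM.2 p hp q hq (Or.inr (Or.inl h))
  exact (hM.1 p hp).ne h

def GapAbove (f : X → ℝ) (M : Set (X × X)) (c : ℝ) (y : X) : Prop :=
  (¬ ∃ z, c < f z ∧ f z < f y) ∧ (f y ≤ c ∨ ∃ w, (w, y) ∈ M)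

theorem gapAbove_of_le {y : X} (h : f y ≤ c) : GapAbove f M c y :=
  ⟨fun ⟨_, hcz, hzy⟩ => (h.trans_lt hcz).not_gt hzy, Or.inl h⟩

theorem GapAbove.hasseEdge [PartialOrder X] {y y' : X} (hf : IsMorseFunction f)
    (hM : IsPosetMatching M) (hgap : ∀ p ∈ M, ¬ ∃ z, f p.1 < f z ∧ f z < f p.2)
    (hy : GapAbove f M c y) (he : hasseEdge M y y') : GapAbove f M c y' := by
  rcases he with ⟨-, hmem⟩ | ⟨hcov, -⟩
  · have hlow : f y ≤ c := hy.2.resolve_right fun ⟨_, hw⟩ => hM.fst_ne_snd hmem hw rfl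
    exact ⟨fun ⟨z, hcz, hzy'⟩ => hgap _ hmem ⟨z, hlow.trans_lt hcz, hzy'⟩, Or.inr ⟨y, hmem⟩⟩
  · exact gapAbove_of_le (not_lt.1 fun hcy' => hy.1 ⟨y', hcy', hf _ _ hcov⟩)

end

theorem no_intermediate_value_along_path {X : Type*} [PartialOrder X] [Fintype X]
    (f : X → ℝ) (M : Set (X × X)) (hf : IsMorseFunction f)
    (hM : IsAdmissibleMorseMatching f M)
    (r : ℕ) (x : ℕ → X) (hpath : ∀ i < r, hasseEdge M (x i) (x (i + 1))) :
    ¬ ∃ z : X, f (x 0) < f z ∧ f z < f (x r) := by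
  have hgap : ∀ p ∈ M, ¬ ∃ z, f p.1 < f z ∧ f z < f p.2 := fun p hp => (hM.2 p hp).2
  have hinv : ∀ i ≤ r, GapAbove f M (f (x 0)) (x i) := by
    intro i hi
    induction i with
    | zero => exact gapAbove_of_le le_rfl
    | succ i ih => exact (ih (by omega)).hasseEdge hf hM.1.1 hgap (hpath i (by omega))
  exact (hinv r le_rfl).1
end

section
/- Let X be a finite poset, f : X → ℝ a Morse function, and M an admissible Morse matching for f. If x is a source node of the directed graph H_M(X) whose f-value is maximal among all source nodes, and x is not a maximal element of X, then there is a unique y ∈ X covering x, the pair (x,y) belongs to M, and y is a maximal element of X. -/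
/-!
Since `x` is a source, every cover `x ⋖ z` must be matched upward, so the matching forces a
unique cover `y` with `(x, y) ∈ M`. If `y` were not maximal, some `u ⋗ y` would have
`f y < f u`. Walking backwards along the acyclic digraph `H_M(X)` from `u` while staying at
height `≥ f y` ends at a source; admissibility is what keeps an upward matched edge from
dropping below `f y`. That source has value `≥ f y > f x`, contradicting the maximality of `f x`.
-/

section MorseMatching

variable {X : Type*} [PartialOrder X] {f : X → ℝ} {M : Set (X × X)}

def IsSource (M : Set (X × X)) (z : X) : Prop :=
  ∀ a, ¬ hasseEdge M a z

/-- Removing the matched upper ends at height `f v` makes this set closed backwards along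
`H_M(X)`: an upward matched edge into it cannot start below `f v`, since `v` would lie strictly
between its ends. -/
def aboveLevel (f : X → ℝ) (M : Set (X × X)) (v : X) : Set X :=
  {z | f v ≤ f z ∧ (f z = f v → ∀ w, (w, z) ∉ M)}

theorem covBy_mem_of_isSource {x z : X} (hx : IsSource M x) (h : x ⋖ z) : (x, z) ∈ M := by
  by_contra hxz
  exact hx z (Or.inr ⟨h, hxz⟩)

theorem wellFounded_hasseEdge [Finite X] (hacyc : ∀ x : X, ¬ Relation.TransGen (hasseEdge M) x x) :
    WellFounded (hasseEdge M) :=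
  have : Std.Irrefl (Relation.TransGen (hasseEdge M)) := ⟨hacyc⟩
  Subrelation.wf Relation.TransGen.single (Finite.wellFounded_of_trans_of_irrefl _)

theorem mem_aboveLevel_of_hasseEdge (hf : IsMorseFunction f) (hmatch : IsPosetMatching M)
    (hadm : ∀ p ∈ M, ¬ ∃ z, f p.1 < f z ∧ f z < f p.2) {v a z : X}
    (hz : z ∈ aboveLevel f M v) (haz : hasseEdge M a z) : a ∈ aboveLevel f M v := by
  obtain ⟨hvz, hz_free⟩ := hz
  rcases haz with ⟨hcov, hmem⟩ | ⟨hcov, -⟩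
  · have hvz' : f v < f z := hvz.lt_of_ne fun h => hz_free h.symm a hmem
    have hva : f v ≤ f a := not_lt.mp fun hav => hadm (a, z) hmem ⟨v, hav, hvz'⟩
    refine ⟨hva, fun _ w hwa => hcov.lt.ne ?_⟩
    -- `a` is already the lower end of `(a, z)`
    exact (congrArg Prod.snd (hmatch.2 (a, z) hmem (w, a) hwa (Or.inr (Or.inl rfl)))).symm
  · have hva : f v < f a := hvz.trans_lt (hf z a hcov)
    exact ⟨hva.le, fun h => absurd h hva.ne'⟩

theorem exists_isSource_le_of_lt [Finite X] (hf : IsMorseFunction f) (hM : IsMorseMatching M)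
    (hadm : ∀ p ∈ M, ¬ ∃ z, f p.1 < f z ∧ f z < f p.2) {v u : X} (hvu : f v < f u) :
    ∃ s, IsSource M s ∧ f v ≤ f s := by
  have hu : u ∈ aboveLevel f M v := ⟨hvu.le, fun h => absurd h hvu.ne'⟩
  obtain ⟨s, hs, hmin⟩ := (wellFounded_hasseEdge hM.2).has_min _ ⟨u, hu⟩
  exact ⟨s, fun a has => hmin a (mem_aboveLevel_of_hasseEdge hf hM.1 hadm hs has) has, hs.1⟩

end MorseMatching

theorem source_max_structure {X : Type*} [PartialOrder X] [Fintype X]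
    (f : X → ℝ) (M : Set (X × X)) (hf : IsMorseFunction f)
    (hM : IsAdmissibleMorseMatching f M) (x : X)
    (hsrc : ∀ a : X, ¬ hasseEdge M a x)
    (hmaxval : ∀ z : X, (∀ a : X, ¬ hasseEdge M a z) → f z ≤ f x)
    (hnotmax : ∃ w : X, x < w) :
    ∃ y : X, x ⋖ y ∧ (x, y) ∈ M ∧ (∀ z : X, x ⋖ z → z = y) ∧ ∀ w : X, ¬ y < w := by
  obtain ⟨hmorse, hadm⟩ := hM
  obtain ⟨y, hy⟩ := exists_covBy_of_wellFoundedLT (not_isMax_iff.mpr hnotmax)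
  have hxy : (x, y) ∈ M := covBy_mem_of_isSource hsrc hy
  refine ⟨y, hy, hxy, fun z hz => ?_, fun w hyw => ?_⟩
  · exact congrArg Prod.snd
      (hmorse.1.2 _ (covBy_mem_of_isSource hsrc hz) _ hxy (Or.inl rfl))
  · obtain ⟨u, hu⟩ := exists_covBy_of_wellFoundedLT (not_isMax_iff.mpr ⟨w, hyw⟩)
    obtain ⟨s, hs, hys⟩ :=
      exists_isSource_le_of_lt hf hmorse (fun p hp => (hadm p hp).2) (hf y u hu)
    exact (hmaxval s hs).not_gt ((hf x y hy).trans_le hys)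
end

section
/- In a finite poset X, if x is an up-beat point, i.e., there is a unique element y covering x and moreover y ≥ z for every z > x, then the inclusion of the order complex of X \ {x} into the order complex of X is a homotopy equivalence (in fact a strong deformation retract). -/
/-!
The retraction of the realization of `X` onto that of `X \ {x}` moves all the weight of `x` onto
`y`. Every element comparable with `x` is comparable with `y` (the ones above `x` lie above `y`),
so adding `y` to a chain through `x` gives a chain; hence the retraction, and the straight-line
homotopy from it to the identity, which moves only part of the weight, stay in the realization.
-/

section ShiftWeight

variable {X : Type*} [DecidableEq X]

def shiftWeight (x y : X) (s : ℝ) (w : X → ℝ) : X → ℝ :=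
  w + (s * w x) • (Pi.single y 1 - Pi.single x 1)

variable {x y : X} {s : ℝ} {w : X → ℝ}

lemma shiftWeight_apply_left (hxy : x ≠ y) : shiftWeight x y s w x = (1 - s) * w x := by
  simp [shiftWeight, hxy]
  ring

lemma shiftWeight_apply_right (hxy : x ≠ y) : shiftWeight x y s w y = w y + s * w x := by
  simp [shiftWeight, Ne.symm hxy]

lemma shiftWeight_apply_of_ne {a : X} (hax : a ≠ x) (hay : a ≠ y) :
    shiftWeight x y s w a = w a := by
  simp [shiftWeight, hax, hay]

lemma shiftWeight_zero (x y : X) (w : X → ℝ) : shiftWeight x y 0 w = w := by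
  simp [shiftWeight]

lemma shiftWeight_of_apply_eq_zero (hw : w x = 0) : shiftWeight x y s w = w := by
  simp [shiftWeight, hw]

lemma sum_shiftWeight [Fintype X] (x y : X) (s : ℝ) (w : X → ℝ) :
    ∑ a, shiftWeight x y s w a = ∑ a, w a := by
  simp [shiftWeight, Finset.sum_add_distrib, ← Finset.mul_sum, Finset.sum_sub_distrib]

lemma support_shiftWeight_subset (x y : X) (s : ℝ) (w : X → ℝ) :
    Function.support (shiftWeight x y s w) ⊆ insert y (Function.support w) := by
  intro a ha
  by_contra h
  simp only [Set.mem_insert_iff, Function.mem_support, not_or, not_not] at h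
  obtain ⟨hay, hwa⟩ := h
  apply ha
  by_cases hax : a = x
  · subst hax
    simp [shiftWeight, hwa]
  · simp [shiftWeight_apply_of_ne hax hay, hwa]

lemma support_shiftWeight_one_subset (hxy : x ≠ y) (w : X → ℝ) :
    Function.support (shiftWeight x y 1 w) ⊆ {x}ᶜ :=
  Set.subset_compl_singleton_iff.mpr (by simp [shiftWeight_apply_left hxy])

lemma continuous_shiftWeight (x y : X) :
    Continuous fun p : ℝ × (X → ℝ) => shiftWeight x y p.1 p.2 := by
  unfold shiftWeight
  fun_prop

end ShiftWeight

section UpBeat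

variable {X : Type*} [PartialOrder X] {x y : X}

lemma IsChain.insert_of_upBeat (hxy : x < y) (hmin : ∀ z, x < z → y ≤ z) {C : Set X}
    (hC : IsChain (· ≤ ·) C) (hx : x ∈ C) : IsChain (· ≤ ·) (insert y C) := by
  refine hC.insert fun b hb _ => ?_
  rcases eq_or_ne x b with rfl | hxb
  · exact Or.inr hxy.le
  · rcases hC hx hb hxb with h | h
    · exact Or.inl (hmin b (h.lt_of_ne hxb))
    · exact Or.inr (h.trans hxy.le)

variable [Fintype X]

lemma mem_realizationSet_of_support_subset {S T : Set X} {w : X → ℝ}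
    (hw : w ∈ realizationSet S) (hT : Function.support w ⊆ T) : w ∈ realizationSet T :=
  ⟨hw.1, hw.2.1, hT, hw.2.2.2⟩

variable [DecidableEq X]

lemma shiftWeight_mem_realizationSet (hxy : x < y) (hmin : ∀ z, x < z → y ≤ z)
    {S : Set X} (hyS : y ∈ S) {s : ℝ} (hs₀ : 0 ≤ s) (hs₁ : s ≤ 1) {w : X → ℝ}
    (hw : w ∈ realizationSet S) : shiftWeight x y s w ∈ realizationSet S := by
  obtain ⟨hnonneg, hsum, hsupp, hchain⟩ := hw
  by_cases hwx : w x = 0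
  · rw [shiftWeight_of_apply_eq_zero hwx]
    exact ⟨hnonneg, hsum, hsupp, hchain⟩
  have hsub := support_shiftWeight_subset x y s w
  refine ⟨fun a => ?_, (sum_shiftWeight x y s w).trans hsum,
    hsub.trans (Set.insert_subset hyS hsupp),
    (hchain.insert_of_upBeat hxy hmin hwx).mono hsub⟩
  rcases eq_or_ne a x with rfl | hax
  · rw [shiftWeight_apply_left hxy.ne]
    exact mul_nonneg (by linarith) (hnonneg a)
  rcases eq_or_ne a y with rfl | hay
  · rw [shiftWeight_apply_right hxy.ne]
    exact add_nonneg (hnonneg a) (mul_nonneg hs₀ (hnonneg x))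
  · rw [shiftWeight_apply_of_ne hax hay]
    exact hnonneg a

def realizationInclusion {S T : Set X} (hST : S ⊆ T) : C(realizationSet S, realizationSet T) :=
  ⟨fun w => ⟨w, mem_realizationSet_of_support_subset w.2 (w.2.2.2.1.trans hST)⟩,
    continuous_subtype_val.subtype_mk _⟩

variable (hxy : x < y) (hmin : ∀ z, x < z → y ≤ z)
include hxy hmin

def upBeatRetraction : C(realizationSet (Set.univ : Set X), realizationSet ({x}ᶜ : Set X)) :=
  ⟨fun w => ⟨shiftWeight x y 1 w, mem_realizationSet_of_support_subset
      (shiftWeight_mem_realizationSet hxy hmin (Set.mem_univ y) zero_le_one le_rfl w.2)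
      (support_shiftWeight_one_subset hxy.ne w)⟩,
    ((continuous_shiftWeight x y).comp
      (continuous_const.prodMk continuous_subtype_val)).subtype_mk _⟩

lemma upBeatRetraction_comp_realizationInclusion :
    (upBeatRetraction hxy hmin).comp (realizationInclusion (Set.subset_univ _)) =
      ContinuousMap.id _ := by
  ext w : 1
  refine Subtype.ext (shiftWeight_of_apply_eq_zero ?_)
  by_contra hwx
  exact w.2.2.2.1 hwx rfl

def upBeatHomotopy :
    ((realizationInclusion (Set.subset_univ _)).comp (upBeatRetraction hxy hmin)).Homotopy
      (ContinuousMap.id (realizationSet (Set.univ : Set X))) where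
  toFun p := ⟨shiftWeight x y (1 - p.1) p.2, shiftWeight_mem_realizationSet hxy hmin
    (Set.mem_univ y) (by linarith [p.1.2.2]) (by linarith [p.1.2.1]) p.2.2⟩
  continuous_toFun := ((continuous_shiftWeight x y).comp
    ((continuous_const.sub (continuous_subtype_val.comp continuous_fst)).prodMk
      (continuous_subtype_val.comp continuous_snd))).subtype_mk _
  map_zero_left w := by ext1; simp [upBeatRetraction, realizationInclusion]
  map_one_left w := by ext1; simp [shiftWeight_zero]

end UpBeat

theorem upbeat_deformation_retract_general {X : Type*} [PartialOrder X] [Fintype X]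
    (x y : X) (hcov : x ⋖ y)
    (hmin : ∀ z : X, x < z → y ≤ z) :
    ∃ e : ContinuousMap.HomotopyEquiv
        ↥(realizationSet ({x}ᶜ : Set X)) ↥(realizationSet (Set.univ : Set X)),
      ∀ w : ↥(realizationSet ({x}ᶜ : Set X)), ((e.toFun w : X → ℝ) = (w : X → ℝ)) := by
  classical
  refine ⟨⟨realizationInclusion (Set.subset_univ _), upBeatRetraction hcov.lt hmin, ?_,
    ⟨upBeatHomotopy hcov.lt hmin⟩⟩, fun _ => rfl⟩
  rw [upBeatRetraction_comp_realizationInclusion]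

theorem upbeat_deformation_retract {X : Type*} [PartialOrder X] [Fintype X]
    (x y : X) (hcov : x ⋖ y) (huniq : ∀ z : X, x ⋖ z → z = y)
    (hmin : ∀ z : X, x < z → y ≤ z) :
    ∃ e : ContinuousMap.HomotopyEquiv
        ↥(realizationSet ({x}ᶜ : Set X)) ↥(realizationSet (Set.univ : Set X)),
      ∀ w : ↥(realizationSet ({x}ᶜ : Set X)), ((e.toFun w : X → ℝ) = (w : X → ℝ)) :=
  upbeat_deformation_retract_general x y hcov hmin
end

section
/- Let X, Y be disjoint finite posets with Morse functions f, g (with f(x) < g(y) for all x ∈ X, y ∈ Y) and admissible Morse matchings M on X and N on Y. Then M ⊔ N is a Morse matching on X ⊛ Y, i.e., the digraph H_{M⊔N}(X ⊛ Y) is acyclic, and every point of X ⊛ Y is critical for M ⊔ N iff it is critical for M (if in X) or for N (if in Y). -/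
def sumMatching {X Y : Type*} (M : Set (X × X)) (N : Set (Y × Y)) :
    Set ((X ⊕ₗ Y) × (X ⊕ₗ Y)) :=
  (fun p : X × X => (toLex (Sum.inl p.1), toLex (Sum.inl p.2))) '' M ∪
  (fun p : Y × Y => (toLex (Sum.inr p.1), toLex (Sum.inr p.2))) '' N

/-!
Covering edges between `X` and `Y` go from `X` up to `Y` and are unmatched, so in the Hasse
digraph of `M ⊔ N` they all point down into `X`. Hence no directed path leaves `X`, and none
enters `Y` from outside: a cycle lies entirely in `X` or entirely in `Y`, where it is a cycle
of `H_M` or `H_N`.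
-/

theorem Relation.TransGen.exists_lift {α β : Type*} {r : β → β → Prop}
    {s : α → α → Prop} {f : α → β}
    (h : ∀ a c, r (f a) c → ∃ a', c = f a' ∧ s a a') {a : α} {c : β}
    (hac : Relation.TransGen r (f a) c) : ∃ a', c = f a' ∧ Relation.TransGen s a a' := by
  induction hac with
  | single hc =>
    obtain ⟨a', rfl, ha'⟩ := h _ _ hc
    exact ⟨a', rfl, .single ha'⟩
  | tail _ hc ih =>
    obtain ⟨b, rfl, hab⟩ := ih
    obtain ⟨a', rfl, hba'⟩ := h _ _ hc
    exact ⟨a', rfl, hab.tail hba'⟩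

namespace Sum.Lex

variable {α β : Type*} [LT α] [LT β]

theorem inl_covBy_inl_iff {a b : α} :
    toLex (inl a : α ⊕ β) ⋖ toLex (inl b) ↔ a ⋖ b := by
  refine ⟨fun h => ⟨inl_lt_inl_iff.1 h.1, fun c hac hcb =>
    h.2 (inl_lt_inl_iff.2 hac) (inl_lt_inl_iff.2 hcb)⟩, fun h => ⟨inl_lt_inl_iff.2 h.1, ?_⟩⟩
  rintro (c | c) hac hcb
  · exact h.2 (inl_lt_inl_iff.1 hac) (inl_lt_inl_iff.1 hcb)
  · exact not_inr_lt_inl hcb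

theorem inr_covBy_inr_iff {a b : β} :
    toLex (inr a : α ⊕ β) ⋖ toLex (inr b) ↔ a ⋖ b := by
  refine ⟨fun h => ⟨inr_lt_inr_iff.1 h.1, fun c hac hcb =>
    h.2 (inr_lt_inr_iff.2 hac) (inr_lt_inr_iff.2 hcb)⟩, fun h => ⟨inr_lt_inr_iff.2 h.1, ?_⟩⟩
  rintro (c | c) hac hcb
  · exact not_inr_lt_inl hac
  · exact h.2 (inr_lt_inr_iff.1 hac) (inr_lt_inr_iff.1 hcb)

end Sum.Lex

open Sum.Lex

section SumMatching

variable {X Y : Type*} {M : Set (X × X)} {N : Set (Y × Y)}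

theorem inl_inl_mem_sumMatching_iff {a b : X} :
    ((toLex (Sum.inl a) : X ⊕ₗ Y), toLex (Sum.inl b)) ∈ sumMatching M N ↔ (a, b) ∈ M := by
  simp [sumMatching]

theorem inr_inr_mem_sumMatching_iff {a b : Y} :
    ((toLex (Sum.inr a) : X ⊕ₗ Y), toLex (Sum.inr b)) ∈ sumMatching M N ↔ (a, b) ∈ N := by
  simp [sumMatching]

theorem inl_inr_notMem_sumMatching {a : X} {b : Y} :
    ((toLex (Sum.inl a) : X ⊕ₗ Y), toLex (Sum.inr b)) ∉ sumMatching M N := by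
  simp [sumMatching]

theorem isCriticalPoint_sumMatching_inl_iff {x : X} :
    IsCriticalPoint (sumMatching M N) (toLex (Sum.inl x)) ↔ IsCriticalPoint M x := by
  simp only [IsCriticalPoint, sumMatching, Set.mem_union, or_imp, forall_and, Set.forall_mem_image]
  simp

theorem isCriticalPoint_sumMatching_inr_iff {y : Y} :
    IsCriticalPoint (sumMatching M N) (toLex (Sum.inr y)) ↔ IsCriticalPoint N y := by
  simp only [IsCriticalPoint, sumMatching, Set.mem_union, or_imp, forall_and, Set.forall_mem_image]
  simp

variable [PartialOrder X] [PartialOrder Y]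

theorem hasseEdge_sumMatching_inl_inl_iff {a b : X} :
    hasseEdge (sumMatching M N) (toLex (Sum.inl a)) (toLex (Sum.inl b)) ↔ hasseEdge M a b := by
  simp only [hasseEdge, inl_covBy_inl_iff, inl_inl_mem_sumMatching_iff]

theorem hasseEdge_sumMatching_inr_inr_iff {a b : Y} :
    hasseEdge (sumMatching M N) (toLex (Sum.inr a)) (toLex (Sum.inr b)) ↔ hasseEdge N a b := by
  simp only [hasseEdge, inr_covBy_inr_iff, inr_inr_mem_sumMatching_iff]

theorem not_hasseEdge_sumMatching_inl_inr {a : X} {b : Y} :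
    ¬ hasseEdge (sumMatching M N) (toLex (Sum.inl a)) (toLex (Sum.inr b)) := by
  rintro (⟨-, hab⟩ | ⟨hba, -⟩)
  exacts [inl_inr_notMem_sumMatching hab, not_inr_lt_inl hba.lt]

theorem hasseEdge_sumMatching_from_inl {a : X} {c : X ⊕ₗ Y}
    (h : hasseEdge (sumMatching M N) (toLex (Sum.inl a)) c) :
    ∃ a', c = toLex (Sum.inl a') ∧ hasseEdge M a a' := by
  obtain c | c := c
  exacts [⟨c, rfl, hasseEdge_sumMatching_inl_inl_iff.1 h⟩,
    (not_hasseEdge_sumMatching_inl_inr h).elim]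

theorem hasseEdge_sumMatching_to_inr {b : Y} {c : X ⊕ₗ Y}
    (h : hasseEdge (sumMatching M N) c (toLex (Sum.inr b))) :
    ∃ b', c = toLex (Sum.inr b') ∧ hasseEdge N b' b := by
  obtain c | c := c
  exacts [(not_hasseEdge_sumMatching_inl_inr h).elim,
    ⟨c, rfl, hasseEdge_sumMatching_inr_inr_iff.1 h⟩]

theorem IsPosetMatching.sum (hM : IsPosetMatching M) (hN : IsPosetMatching N) :
    IsPosetMatching (sumMatching M N) := by
  refine ⟨?_, ?_⟩
  · rintro _ (⟨p, hp, rfl⟩ | ⟨p, hp, rfl⟩)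
    exacts [inl_covBy_inl_iff.2 (hM.1 p hp), inr_covBy_inr_iff.2 (hN.1 p hp)]
  · rintro _ (⟨p, hp, rfl⟩ | ⟨p, hp, rfl⟩) _ (⟨q, hq, rfl⟩ | ⟨q, hq, rfl⟩) hpq <;>
      simp only [toLex_inj, Sum.inl.injEq, Sum.inr.injEq, reduceCtorEq, or_false] at hpq ⊢
    · rw [hM.2 p hp q hq hpq]
    · rw [hN.2 p hp q hq hpq]

theorem IsMorseMatching.sum (hM : IsMorseMatching M) (hN : IsMorseMatching N) :
    IsMorseMatching (sumMatching M N) := by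
  refine ⟨hM.1.sum hN.1, ?_⟩
  rintro (a | b) hcycle
  · obtain ⟨a', ha', hcycle⟩ := hcycle.exists_lift fun _ _ => hasseEdge_sumMatching_from_inl
    obtain rfl : a = a' := Sum.inl.inj ha'
    exact hM.2 a hcycle
  · obtain ⟨b', hb', hcycle⟩ := (Relation.transGen_swap.2 hcycle).exists_lift
      fun _ _ => hasseEdge_sumMatching_to_inr
    obtain rfl : b = b' := Sum.inr.inj hb'
    exact hN.2 b (Relation.transGen_swap.1 hcycle)

end SumMatching

theorem ordinal_sum_morse_matching_general {X Y : Type*} [PartialOrder X] [PartialOrder Y]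
    [Fintype X] [Fintype Y]
    (f : X → ℝ) (g : Y → ℝ)
    (M : Set (X × X)) (N : Set (Y × Y))
    (hM : IsAdmissibleMorseMatching f M) (hN : IsAdmissibleMorseMatching g N) :
    IsMorseMatching (sumMatching M N) ∧
    (∀ x : X, IsCriticalPoint (sumMatching M N) (toLex (Sum.inl x)) ↔ IsCriticalPoint M x) ∧
    (∀ y : Y, IsCriticalPoint (sumMatching M N) (toLex (Sum.inr y)) ↔ IsCriticalPoint N y) :=
  ⟨hM.1.sum hN.1, fun _ => isCriticalPoint_sumMatching_inl_iff,
    fun _ => isCriticalPoint_sumMatching_inr_iff⟩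

theorem ordinal_sum_morse_matching {X Y : Type*} [PartialOrder X] [PartialOrder Y]
    [Fintype X] [Fintype Y]
    (f : X → ℝ) (g : Y → ℝ) (hf : IsMorseFunction f) (hg : IsMorseFunction g)
    (hfg : ∀ (x : X) (y : Y), f x < g y)
    (M : Set (X × X)) (N : Set (Y × Y))
    (hM : IsAdmissibleMorseMatching f M) (hN : IsAdmissibleMorseMatching g N) :
    IsMorseMatching (sumMatching M N) ∧
    (∀ x : X, IsCriticalPoint (sumMatching M N) (toLex (Sum.inl x)) ↔ IsCriticalPoint M x) ∧
    (∀ y : Y, IsCriticalPoint (sumMatching M N) (toLex (Sum.inr y)) ↔ IsCriticalPoint N y) :=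
  ordinal_sum_morse_matching_general f g M N hM hN
end

section
/- Let X be a finite poset and x ∈ X maximal. If the order complex of the strict down-set {z : z < x} is contractible, then the inclusion K(X \ {x}) ↪ K(X) is a homotopy equivalence. -/
/-
The closed star of the maximal element `x` in the realization of `X` is the cone with apex `x`
over the realization `L` of `{z | z < x}`, and it meets the realization of `X \ {x}` exactly in
`L`. Write the points of the star in cone coordinates `(v, t) ↦ (1 - t) • v + t • δₓ` with
`v ∈ L`. If `H` contracts `L` to a point, then moving `(v, t)` to the cone point over `H(σ, v)`
at height `τ`, for suitable reparametrisations `σ, τ` of the homotopy parameter, is constant in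
`v` at the apex, so it descends along cone coordinates, a quotient map because its domain is
compact. This deforms the star into `L` while fixing `L`; extended by the identity outside the
star it is a strong deformation retraction of the whole realization onto that of `X \ {x}`.
-/

open Function Set unitInterval

theorem continuous_dite_of_isClosed {α β : Type*} [TopologicalSpace α] [TopologicalSpace β]
    {p : α → Prop} [DecidablePred p] {s : Set α} (hp : IsClosed {a | p a}) (hs : IsClosed s)
    (hcover : ∀ a, p a ∨ a ∈ s) {f : Subtype p → β} {g : α → β} (hf : Continuous f)
    (hg : ContinuousOn g s) (hfg : ∀ a (ha : p a), a ∈ s → f ⟨a, ha⟩ = g a) :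
    Continuous fun a => if ha : p a then f ⟨a, ha⟩ else g a := by
  have hunion : {a | p a} ∪ s = univ := eq_univ_of_forall hcover
  rw [← continuousOn_univ, ← hunion]
  refine ContinuousOn.union_of_isClosed ?_ ?_ hp hs
  · rw [continuousOn_iff_continuous_domRestrict]
    exact hf.congr fun ⟨a, ha⟩ => by simp [ha]
  · refine hg.congr fun a ha => ?_
    by_cases hpa : p a
    · simp [hpa, hfg a hpa ha]
    · simp [hpa]

namespace realizationSet

variable {X : Type*} [PartialOrder X] [Fintype X] {S T : Set X} {w : X → ℝ}

theorem mono (h : S ⊆ T) : realizationSet S ⊆ realizationSet T :=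
  fun _ hw => ⟨hw.1, hw.2.1, hw.2.2.1.trans h, hw.2.2.2⟩

theorem apply_le_one (hw : w ∈ realizationSet S) (a : X) : w a ≤ 1 :=
  hw.2.1 ▸ Finset.single_le_sum (fun b _ => hw.1 b) (Finset.mem_univ a)

theorem apply_eq_zero (hw : w ∈ realizationSet S) {a : X} (ha : a ∉ S) : w a = 0 :=
  notMem_support.mp fun h => ha (hw.2.2.1 h)

theorem apply_self_eq_zero {x : X} (hw : w ∈ realizationSet (Iio x)) : w x = 0 :=
  apply_eq_zero hw (lt_irrefl x)

theorem eq_single_of_apply_eq_one [DecidableEq X] (hw : w ∈ realizationSet S) {x : X}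
    (hx : w x = 1) : w = Pi.single x 1 := by
  have hrest : ∑ b ∈ Finset.univ.erase x, w b = 0 := by
    linarith [Finset.add_sum_erase Finset.univ w (Finset.mem_univ x), hw.2.1]
  ext z
  rcases eq_or_ne z x with rfl | hz
  · simp [hx]
  · rw [Pi.single_eq_of_ne hz]
    exact (Finset.sum_eq_zero_iff_of_nonneg fun b _ => hw.1 b).mp hrest z
      (Finset.mem_erase.mpr ⟨hz, Finset.mem_univ z⟩)

theorem mem_Iic_of_apply_ne_zero {x : X} (hmax : ∀ z, ¬ x < z) (hw : w ∈ realizationSet S)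
    (hx : w x ≠ 0) : w ∈ realizationSet (Iic x) := by
  refine ⟨hw.1, hw.2.1, fun z hz => ?_, hw.2.2.2⟩
  rcases eq_or_ne z x with rfl | hne
  · exact self_mem_Iic
  · exact (hw.2.2.2.total hz hx).resolve_right fun h => hmax z (lt_of_le_of_ne h hne.symm)

theorem mem_compl_singleton {x : X} (hw : w ∈ realizationSet S) (hx : w x = 0) :
    w ∈ realizationSet {x}ᶜ :=
  ⟨hw.1, hw.2.1, fun _ hz hzx => hz (hzx ▸ hx), hw.2.2.2⟩

theorem isClosed (S : Set X) : IsClosed (realizationSet S) := by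
  have hsupp : ∀ w : X → ℝ, support w ⊆ S ↔ ∀ a, a ∈ S ∨ w a = 0 := fun w =>
    support_subset_iff'.trans <| forall_congr' fun a => by tauto
  have hchain : ∀ w : X → ℝ, IsChain (· ≤ ·) (support w) ↔
      ∀ a b, (a ≤ b ∨ b ≤ a) ∨ w a = 0 ∨ w b = 0 := by
    intro w
    refine ⟨fun h a b => ?_, fun h a ha b hb hab => ?_⟩
    · by_contra! ⟨⟨hab, hba⟩, ha, hb⟩
      exact (h.total ha hb).elim hab hba
    · exact (h a b).resolve_right (not_or.mpr ⟨ha, hb⟩)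
  have hzero (a : X) : IsClosed {w : X → ℝ | w a = 0} :=
    isClosed_eq (continuous_apply a) continuous_const
  simp only [realizationSet, hsupp, hchain, ofPred_and, ofPred_forall, ofPred_or]
  refine .inter (isClosed_iInter fun a => isClosed_le continuous_const (continuous_apply a))
    (.inter (isClosed_eq (by fun_prop) continuous_const) (.inter ?_ ?_))
  · exact isClosed_iInter fun a => isClosed_const.union (hzero a)
  · exact isClosed_iInter fun a => isClosed_iInter fun b =>
      (isClosed_const.union isClosed_const).union ((hzero a).union (hzero b))

theorem isCompact (S : Set X) : IsCompact (realizationSet S) :=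
  (isCompact_univ_pi fun _ => isCompact_Icc (a := (0 : ℝ)) (b := 1)).of_isClosed_subset
    (isClosed S) fun _ hw => mem_univ_pi.mpr fun a => ⟨hw.1 a, apply_le_one hw a⟩

instance (S : Set X) : CompactSpace (realizationSet S) :=
  isCompact_iff_compactSpace.mp (isCompact S)

end realizationSet

/-- A strong deformation retraction of `realizationSet S` onto its face `{w | w x = 0}`, which is
the realization of `S \ {x}`. -/
structure IsDeformationAvoiding {X : Type*} [PartialOrder X] [Fintype X] (x : X) {S : Set X}
    (F : C(I × realizationSet S, realizationSet S)) : Prop where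
  apply_zero : ∀ w, F (0, w) = w
  apply_one_self : ∀ w, (F (1, w) : X → ℝ) x = 0
  apply_of_eq_zero : ∀ (s : I) (w : realizationSet S), (w : X → ℝ) x = 0 → F (s, w) = w

section Cone

variable {X : Type*} [DecidableEq X] (x : X)

noncomputable def conePoint (v : X → ℝ) (t : ℝ) : X → ℝ :=
  (1 - t) • v + t • Pi.single x 1

variable {x} {v w : X → ℝ} {t : ℝ}

theorem conePoint_apply_self (hv : v x = 0) (t : ℝ) : conePoint x v t x = t := by
  simp [conePoint, hv]

@[simp]
theorem conePoint_zero (v : X → ℝ) : conePoint x v 0 = v := by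
  simp [conePoint]

@[simp]
theorem conePoint_one (v : X → ℝ) : conePoint x v 1 = Pi.single x 1 := by
  simp [conePoint]

theorem support_conePoint_subset (v : X → ℝ) (t : ℝ) :
    support (conePoint x v t) ⊆ insert x (support v) := by
  intro z hz
  rcases eq_or_ne z x with rfl | hzx
  · exact mem_insert _ _
  · refine mem_insert_of_mem _ fun hvz => hz ?_
    simp [conePoint, hvz, Pi.single_eq_of_ne hzx]

theorem conePoint_inj {v' : X → ℝ} {t' : ℝ} (hv : v x = 0) (hv' : v' x = 0)
    (h : conePoint x v t = conePoint x v' t') : t = t' ∧ (t = 1 ∨ v = v') := by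
  have htt : t = t' := by
    simpa [conePoint_apply_self hv, conePoint_apply_self hv'] using congrFun h x
  subst htt
  refine ⟨rfl, or_iff_not_imp_left.mpr fun ht => ?_⟩
  have hne : 1 - t ≠ 0 := sub_ne_zero.mpr (Ne.symm ht)
  simpa [conePoint, hne] using h

variable [PartialOrder X] [Fintype X]

theorem conePoint_mem (hv : v ∈ realizationSet (Iio x)) (ht : t ∈ Icc (0 : ℝ) 1) :
    conePoint x v t ∈ realizationSet (Iic x) := by
  have hsupp := support_conePoint_subset (x := x) v t
  refine ⟨fun a => ?_, ?_, ?_, ?_⟩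
  · have hsingle : (0 : ℝ) ≤ (Pi.single x 1 : X → ℝ) a := by
      rcases eq_or_ne a x with rfl | h <;> simp [*]
    simp only [conePoint, Pi.add_apply, Pi.smul_apply, smul_eq_mul]
    nlinarith [hv.1 a, ht.1, ht.2]
  · simp [conePoint, Finset.sum_add_distrib, ← Finset.mul_sum, hv.2.1]
  · exact hsupp.trans <|
      insert_subset_iff.mpr ⟨self_mem_Iic, hv.2.2.1.trans Iio_subset_Iic_self⟩
  · exact (hv.2.2.2.insert fun b hb _ => Or.inr (hv.2.2.1 hb).le).mono hsupp

theorem exists_conePoint_eq (hw : w ∈ realizationSet (Iic x))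
    (hlink : (realizationSet (Iio x)).Nonempty) :
    ∃ v ∈ realizationSet (Iio x), ∃ t ∈ Icc (0 : ℝ) 1, conePoint x v t = w := by
  have hwx : w x ∈ Icc (0 : ℝ) 1 := ⟨hw.1 x, realizationSet.apply_le_one hw x⟩
  by_cases h1 : w x = 1
  · obtain ⟨c, hc⟩ := hlink
    exact ⟨c, hc, 1, right_mem_Icc.mpr zero_le_one, by
      rw [conePoint_one, realizationSet.eq_single_of_apply_eq_one hw h1]⟩
  have hpos : 0 < 1 - w x := sub_pos.mpr (lt_of_le_of_ne hwx.2 h1)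
  set v := (1 - w x)⁻¹ • update w x 0
  have hvw : conePoint x v (w x) = w := by
    ext z
    rcases eq_or_ne z x with rfl | hz
    · simp [conePoint, v]
    · simp [conePoint, v, hz, hpos.ne']
  have hsupp : support v ⊆ support w ∩ {x}ᶜ := by
    intro z hz
    rcases eq_or_ne z x with rfl | hzx
    · simp [v] at hz
    · exact ⟨fun h => hz (by simp [v, hzx, h]), hzx⟩
  refine ⟨v, ⟨fun a => ?_, ?_, fun z hz => ?_, hw.2.2.2.mono fun z hz => (hsupp hz).1⟩,
    w x, hwx, hvw⟩
  · have : 0 ≤ update w x 0 a := by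
      rcases eq_or_ne a x with rfl | h <;> simp [*, hw.1 a]
    exact mul_nonneg (inv_nonneg.mpr hpos.le) this
  · have hsum := congrArg (fun u : X → ℝ => ∑ a, u a) hvw
    simp only [conePoint, Pi.add_apply, Pi.smul_apply, smul_eq_mul, Finset.sum_add_distrib,
      ← Finset.mul_sum, Finset.sum_pi_single', Finset.mem_univ, if_true, hw.2.1] at hsum
    have : (1 - w x) * (∑ a, v a - 1) = 0 := by linarith
    simpa [sub_eq_zero, hpos.ne'] using this
  · exact lt_of_le_of_ne (hw.2.2.1 (hsupp hz).1) (hsupp hz).2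

end Cone

section ConeTime

/- For `s ≤ 1/2` a point keeps its height `t` while its link coordinate is contracted with
parameter `2st`; then it drops to the base. At the apex the contraction is complete before the
drop starts, so nothing there depends on the link coordinate. -/
noncomputable def coneTime (s t : I) : I := projIcc 0 1 zero_le_one (2 * (s : ℝ) * t)

noncomputable def coneHeight (s t : I) : I :=
  projIcc 0 1 zero_le_one (t * min 1 (2 - 2 * (s : ℝ)))

@[simp]
theorem coneTime_zero_left (t : I) : coneTime 0 t = 0 := by
  simp [coneTime]

@[simp]
theorem coneTime_zero_right (s : I) : coneTime s 0 = 0 := by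
  simp [coneTime]

@[simp]
theorem coneHeight_zero_left (t : I) : coneHeight 0 t = t := by
  simp [coneHeight]

@[simp]
theorem coneHeight_zero_right (s : I) : coneHeight s 0 = 0 := by
  simp [coneHeight]

@[simp]
theorem coneHeight_one_left (t : I) : coneHeight 1 t = 0 := by
  simp [coneHeight]

theorem coneHeight_eq_one_or_coneTime_eq_one (s : I) :
    coneHeight s 1 = 1 ∨ coneTime s 1 = 1 := by
  rcases le_total (s : ℝ) (1 / 2) with hs | hs
  · left
    simp [coneHeight, min_eq_left (by linarith : (1 : ℝ) ≤ 2 - 2 * s)]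
  · right
    simpa [coneTime] using (projIcc_eq_right (h := zero_lt_one' ℝ)).mpr (by linarith)

@[fun_prop]
theorem continuous_coneTime : Continuous fun p : I × I => coneTime p.1 p.2 := by
  unfold coneTime; fun_prop

@[fun_prop]
theorem continuous_coneHeight : Continuous fun p : I × I => coneHeight p.1 p.2 := by
  unfold coneHeight; fun_prop

end ConeTime

section StarDeformation

variable {X : Type*} [PartialOrder X] [Fintype X] [DecidableEq X] (x : X)

noncomputable def coneMk : C(I × (realizationSet (Iio x) × I), I × realizationSet (Iic x)) where
  toFun p := (p.1, ⟨conePoint x p.2.1 p.2.2, conePoint_mem p.2.1.2 p.2.2.2⟩)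
  continuous_toFun := by
    refine continuous_fst.prodMk (Continuous.subtype_mk ?_ _)
    unfold conePoint
    fun_prop

theorem isQuotientMap_coneMk (hlink : (realizationSet (Iio x)).Nonempty) :
    Topology.IsQuotientMap (coneMk x) := by
  refine (coneMk x).continuous.isClosedMap.isQuotientMap (coneMk x).continuous ?_
  rintro ⟨s, w⟩
  obtain ⟨v, hv, t, ht, hvt⟩ := exists_conePoint_eq w.2 hlink
  exact ⟨(s, ⟨v, hv⟩, ⟨t, ht⟩), Prod.ext rfl (Subtype.ext hvt)⟩

variable {x} {c : realizationSet (Iio x)}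
  (H : (ContinuousMap.id (realizationSet (Iio x))).Homotopy (ContinuousMap.const _ c))

noncomputable def coneDeformation :
    C(I × (realizationSet (Iio x) × I), realizationSet (Iic x)) where
  toFun p := ⟨conePoint x (H (coneTime p.1 p.2.2, p.2.1)) (coneHeight p.1 p.2.2),
    conePoint_mem (H _).2 (coneHeight _ _).2⟩
  continuous_toFun := by
    refine Continuous.subtype_mk ?_ _
    unfold conePoint
    fun_prop

theorem coneDeformation_apex (s : I) (v v' : realizationSet (Iio x)) :
    coneDeformation H (s, v, 1) = coneDeformation H (s, v', 1) := by
  apply Subtype.ext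
  rcases coneHeight_eq_one_or_coneTime_eq_one s with h | h <;> simp [coneDeformation, h]

theorem factorsThrough_coneDeformation : FactorsThrough (coneDeformation H) (coneMk x) := by
  rintro ⟨s, v, t⟩ ⟨s', v', t'⟩ h
  simp only [coneMk, ContinuousMap.coe_mk, Prod.mk.injEq, Subtype.mk.injEq] at h
  obtain ⟨rfl, hvt⟩ := h
  obtain ⟨htt, ht1 | hvv⟩ := conePoint_inj (realizationSet.apply_self_eq_zero v.2)
    (realizationSet.apply_self_eq_zero v'.2) hvt
  · obtain rfl : t = 1 := Subtype.ext ht1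
    obtain rfl : t' = 1 := Subtype.ext (htt.symm.trans ht1)
    exact coneDeformation_apex H s v v'
  · rw [Subtype.ext htt, Subtype.ext hvv]

theorem coneDeformation_zero (q : realizationSet (Iio x) × I) :
    coneDeformation H (0, q) = (coneMk x (0, q)).2 :=
  Subtype.ext (by simp [coneDeformation, coneMk])

theorem coneDeformation_one_apply_self (q : realizationSet (Iio x) × I) :
    (coneDeformation H (1, q) : X → ℝ) x = 0 := by
  simpa [coneDeformation] using realizationSet.apply_self_eq_zero (H _).2

theorem coneDeformation_base (s : I) (v : realizationSet (Iio x)) :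
    coneDeformation H (s, v, 0) = (coneMk x (s, v, 0)).2 :=
  Subtype.ext (by simp [coneDeformation, coneMk])

variable (x) in
theorem exists_isDeformationAvoiding_Iic [ContractibleSpace (realizationSet (Iio x))] :
    ∃ F : C(I × realizationSet (Iic x), realizationSet (Iic x)), IsDeformationAvoiding x F := by
  obtain ⟨c, ⟨H⟩⟩ := id_nullhomotopic (realizationSet (Iio x))
  have hq := isQuotientMap_coneMk x ⟨c, c.2⟩
  have hF (p) : hq.lift _ (factorsThrough_coneDeformation H) (coneMk x p) = coneDeformation H p :=
    DFunLike.congr_fun (hq.lift_comp (coneDeformation H) (factorsThrough_coneDeformation H)) p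
  refine ⟨hq.lift _ (factorsThrough_coneDeformation H),
    ⟨fun w => ?_, fun w => ?_, fun s w hw => ?_⟩⟩
  · obtain ⟨⟨s, q⟩, hp⟩ := hq.surjective (0, w)
    obtain rfl : s = 0 := congrArg Prod.fst hp
    rw [← hp, hF, coneDeformation_zero, hp]
  · obtain ⟨⟨s, q⟩, hp⟩ := hq.surjective (1, w)
    obtain rfl : s = 1 := congrArg Prod.fst hp
    rw [← hp, hF]
    exact coneDeformation_one_apply_self H q
  · obtain ⟨⟨s', v, t⟩, hp⟩ := hq.surjective (s, w)
    obtain rfl : s' = s := congrArg Prod.fst hp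
    have hvt : conePoint x v t = w := congrArg (Subtype.val ∘ Prod.snd) hp
    obtain rfl : t = 0 := Subtype.ext <| by
      simpa [conePoint_apply_self (realizationSet.apply_self_eq_zero v.2), hw] using congrFun hvt x
    rw [← hp, hF, coneDeformation_base, hp]

end StarDeformation

theorem exists_isDeformationAvoiding_univ {X : Type*} [PartialOrder X] [Fintype X] {x : X}
    (hmax : ∀ z, ¬ x < z) [ContractibleSpace (realizationSet (Iio x))] :
    ∃ G : C(I × realizationSet (univ : Set X), realizationSet univ),
      IsDeformationAvoiding x G := by
  classical
  obtain ⟨F, hF⟩ := exists_isDeformationAvoiding_Iic x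
  let incl : realizationSet (Iic x) → realizationSet (univ : Set X) :=
    inclusion (realizationSet.mono (subset_univ _))
  let G (p : I × realizationSet (univ : Set X)) : realizationSet (univ : Set X) :=
    if h : (p.2 : X → ℝ) ∈ realizationSet (Iic x) then incl (F (p.1, ⟨p.2, h⟩)) else p.2
  have hval : Continuous fun p : I × realizationSet (univ : Set X) => (p.2 : X → ℝ) :=
    continuous_subtype_val.comp continuous_snd
  have hG : Continuous G := by
    refine continuous_dite_of_isClosed ((realizationSet.isClosed _).preimage hval)
      (f := fun q => incl (F (q.1.1, ⟨q.1.2, q.2⟩))) (s := {p | (p.2 : X → ℝ) x = 0})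
      (isClosed_eq ((continuous_apply x).comp hval) continuous_const)
      (fun p => ?_) (by fun_prop) continuous_snd.continuousOn fun p hp hpx => ?_
    · exact or_iff_not_imp_right.mpr (realizationSet.mem_Iic_of_apply_ne_zero hmax p.2.2)
    · exact congrArg incl (hF.apply_of_eq_zero p.1 ⟨p.2, hp⟩ hpx)
  refine ⟨⟨G, hG⟩, ⟨fun w => ?_, fun w => ?_, fun s w hw => ?_⟩⟩
  · show G (0, w) = w
    simp only [G]
    split_ifs with h
    · exact congrArg incl (hF.apply_zero ⟨w, h⟩)
    · rfl
  · show (G (1, w) : X → ℝ) x = 0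
    simp only [G]
    split_ifs with h
    · exact hF.apply_one_self ⟨w, h⟩
    · exact not_not.mp fun hx => h (realizationSet.mem_Iic_of_apply_ne_zero hmax w.2 hx)
  · show G (s, w) = w
    simp only [G]
    split_ifs with h
    · exact congrArg incl (hF.apply_of_eq_zero s ⟨w, h⟩ hw)
    · rfl

theorem IsDeformationAvoiding.exists_homotopyEquiv {X : Type*} [PartialOrder X] [Fintype X]
    {x : X} {G : C(I × realizationSet (univ : Set X), realizationSet univ)}
    (hG : IsDeformationAvoiding x G) :
    ∃ e : ContinuousMap.HomotopyEquiv (realizationSet ({x}ᶜ : Set X))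
        (realizationSet (univ : Set X)), ∀ w, (e.toFun w : X → ℝ) = w := by
  let incl : C(realizationSet ({x}ᶜ : Set X), realizationSet univ) :=
    ⟨inclusion (realizationSet.mono (subset_univ _)), continuous_inclusion _⟩
  let r : C(realizationSet univ, realizationSet ({x}ᶜ : Set X)) :=
    ⟨fun w => ⟨G (1, w),
      realizationSet.mem_compl_singleton (G (1, w)).2 (hG.apply_one_self w)⟩, by fun_prop⟩
  have hr : r.comp incl = .id _ := ContinuousMap.ext fun w => Subtype.ext <|
    (congrArg Subtype.val <|
      hG.apply_of_eq_zero 1 (incl w) (realizationSet.apply_eq_zero w.2 (by simp)) :)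
  exact ⟨⟨incl, r, hr ▸ .refl _, ⟨.symm ⟨G, hG.apply_zero, fun _ => rfl⟩⟩⟩,
    fun _ => rfl⟩

theorem remove_maximal_contractible_downset {X : Type*} [PartialOrder X] [Fintype X]
    (x : X) (hmax : ∀ z : X, ¬ x < z)
    (hcontr : HomotopicallyTrivial {z : X | z < x}) :
    ∃ e : ContinuousMap.HomotopyEquiv
        ↥(realizationSet ({x}ᶜ : Set X)) ↥(realizationSet (Set.univ : Set X)),
      ∀ w : ↥(realizationSet ({x}ᶜ : Set X)), ((e.toFun w : X → ℝ) = (w : X → ℝ)) := by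
  have : ContractibleSpace (realizationSet (Iio x)) := hcontr
  obtain ⟨G, hG⟩ := exists_isDeformationAvoiding_univ hmax
  exact hG.exists_homotopyEquiv
end
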